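/- The range of the function φ(x1,x2) := (1/3)(cos x1 + cos x2 + cos(x1−x2)) over ℝ² is the interval [−1/2, 1]. -/

import Mathlib

/-! The lower bound comes from `6 φ + 3 = |1 + e^{i x₁} + e^{i x₂}|² ≥ 0`, the upper one from
`cos ≤ 1`; both are attained, at `(2π/3, -2π/3)` and `(0, 0)`, and since `φ` is continuous on the
connected plane its range contains everything in between. -/

open Real

noncomputable def hexφ (x1 x2 : ℝ) : ℝ :=
  (1/3) * (Real.cos x1 + Real.cos x2 + Real.cos (x1 - x2))

theorem hexφ_six_mul_add_three (x1 x2 : ℝ) :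
    6 * hexφ x1 x2 + 3 = (1 + cos x1 + cos x2) ^ 2 + (sin x1 + sin x2) ^ 2 := by
  rw [hexφ, cos_sub]
  linear_combination (-1 : ℝ) * sin_sq_add_cos_sq x1 - sin_sq_add_cos_sq x2

theorem neg_half_le_hexφ (x1 x2 : ℝ) : -(1/2) ≤ hexφ x1 x2 := by
  nlinarith [hexφ_six_mul_add_three x1 x2, sq_nonneg (1 + cos x1 + cos x2),
    sq_nonneg (sin x1 + sin x2)]

theorem hexφ_le_one (x1 x2 : ℝ) : hexφ x1 x2 ≤ 1 := by
  rw [hexφ]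
  linarith [cos_le_one x1, cos_le_one x2, cos_le_one (x1 - x2)]

theorem hexφ_zero_zero : hexφ 0 0 = 1 := by
  norm_num [hexφ]

theorem hexφ_two_pi_div_three : hexφ (2 * π / 3) (-(2 * π / 3)) = -(1/2) := by
  have h₁ : cos (2 * π / 3) = -(1/2) := by
    rw [show 2 * π / 3 = π - π / 3 by ring, cos_pi_sub, cos_pi_div_three]
  have h₂ : cos (2 * π / 3 - -(2 * π / 3)) = -(1/2) := by
    rw [show 2 * π / 3 - -(2 * π / 3) = π / 3 + π by ring, cos_add_pi, cos_pi_div_three]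
  rw [hexφ, cos_neg, h₁, h₂]
  norm_num

theorem continuous_hexφ : Continuous (fun p : ℝ × ℝ => hexφ p.1 p.2) := by
  unfold hexφ
  fun_prop

theorem hexφ_range :
    Set.range (fun p : ℝ × ℝ => hexφ p.1 p.2) = Set.Icc (-(1/2) : ℝ) 1 := by
  refine Set.Subset.antisymm ?_ fun y hy => ?_
  · rintro _ ⟨⟨x1, x2⟩, rfl⟩
    exact ⟨neg_half_le_hexφ x1 x2, hexφ_le_one x1 x2⟩
  · exact (isPreconnected_range continuous_hexφ).Icc_subset
      ⟨(2 * π / 3, -(2 * π / 3)), hexφ_two_pi_div_three⟩ ⟨(0, 0), hexφ_zero_zero⟩ hy
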